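/- arXiv:1604.04297 — 3 statements merged into one kernel-verified Lean document; each statement's English description precedes it below -/
import Mathlib

section
/- (Integration by parts for the scale derivative, convergent case.) Let a < b, δ > 0, α, β ∈ (0,1) with α + β > 1, and let f, g : ℝ → ℝ be continuous on [a−δ, b+δ], with f Hölder of exponent α and g Hölder of exponent β on [a−δ, b+δ]. Suppose there are functions F, G : [a,b] → ℂ and a constant M > 0 such that for every t ∈ [a,b]: □_h f(t) → F(t) and □_h g(t) → G(t) as h → 0⁺, and |□_h f(t)| ≤ M and |□_h g(t)| ≤ M for all h ∈ (0, δ). Then ∫_a^b F(t)·g(t) dt = f(b)g(b) − f(a)g(a) − ∫_a^b f(t)·G(t) dt. -/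
open Filter

/-- Delta derivative: `Δ_h[f](t) = (f(t+h) − f(t))/h`. -/
noncomputable def deltaD (f : ℝ → ℝ) (h t : ℝ) : ℝ := (f (t + h) - f t) / h

/-- Nabla derivative: `∇_h[f](t) = (f(t) − f(t−h))/h`. -/
noncomputable def nablaD (f : ℝ → ℝ) (h t : ℝ) : ℝ := (f t - f (t - h)) / h

/-- The `h`-scale derivative:
`□_h f(t) = (1/2)[(Δ_h[f](t) + ∇_h[f](t)) + i(Δ_h[f](t) − ∇_h[f](t))]`. -/
noncomputable def scaleD (f : ℝ → ℝ) (h t : ℝ) : ℂ :=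
  (1 / 2 : ℂ) * (((deltaD f h t + nablaD f h t : ℝ) : ℂ)
    + Complex.I * ((deltaD f h t - nablaD f h t : ℝ) : ℂ))

/-!
Since `□_h = (1 + i)/2 · Δ_h + (1 - i)/2 · ∇_h`, the discrete product rules for `Δ_h` and `∇_h`
give `□_h (f g) = □_h f · g + f · □_h g + R_h` with `‖R_h‖ ≤ 8 h ‖□_h f‖ ‖□_h g‖ ≤ 8 h M²`.
The integral of `Δ_h P` over `[a, b]` telescopes to `(∫_b^{b+h} P - ∫_a^{a+h} P) / h`, which tends
to `P b - P a` by the fundamental theorem of calculus, and likewise for `∇_h P`; hence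
`∫_a^b □_h (f g) → f(b) g(b) - f(a) g(a)`. Dominated convergence (with the bound `M`) sends
`∫_a^b □_h f · g` and `∫_a^b f · □_h g` to `∫_a^b F g` and `∫_a^b f G`.
-/

open Set Topology MeasureTheory Complex

section Algebra

variable (f g : ℝ → ℝ) (h t : ℝ)

lemma nablaD_eq_deltaD_neg : nablaD f h = deltaD f (-h) := by
  funext t
  rw [nablaD, deltaD, ← sub_eq_add_neg, div_neg, ← neg_div, neg_sub]

lemma scaleD_eq_deltaD_add_nablaD :
    scaleD f h t = (1 + I) / 2 * deltaD f h t + (1 - I) / 2 * nablaD f h t := by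
  simp only [scaleD]; push_cast; ring

lemma scaleD_re : (scaleD f h t).re = (deltaD f h t + nablaD f h t) / 2 := by
  simp [scaleD, div_eq_inv_mul]

lemma scaleD_im : (scaleD f h t).im = (deltaD f h t - nablaD f h t) / 2 := by
  simp [scaleD, div_eq_inv_mul]

lemma abs_deltaD_le_two_mul_norm_scaleD : |deltaD f h t| ≤ 2 * ‖scaleD f h t‖ := by
  have hre := abs_re_le_norm (scaleD f h t)
  have him := abs_im_le_norm (scaleD f h t)
  rw [scaleD_re] at hre; rw [scaleD_im] at him
  calc |deltaD f h t|
        = |(deltaD f h t + nablaD f h t) / 2 + (deltaD f h t - nablaD f h t) / 2| := by ring_nf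
    _ ≤ _ := (abs_add_le _ _).trans (by linarith)

lemma abs_nablaD_le_two_mul_norm_scaleD : |nablaD f h t| ≤ 2 * ‖scaleD f h t‖ := by
  have hre := abs_re_le_norm (scaleD f h t)
  have him := abs_im_le_norm (scaleD f h t)
  rw [scaleD_re] at hre; rw [scaleD_im] at him
  calc |nablaD f h t|
        = |(deltaD f h t + nablaD f h t) / 2 - (deltaD f h t - nablaD f h t) / 2| := by ring_nf
    _ ≤ _ := (abs_sub _ _).trans (by linarith)

variable {h}

lemma deltaD_mul (hh : h ≠ 0) :
    deltaD (f * g) h t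
      = deltaD f h t * g t + f t * deltaD g h t + h * (deltaD f h t * deltaD g h t) := by
  simp only [deltaD, Pi.mul_apply]; field_simp; ring

lemma nablaD_mul (hh : h ≠ 0) :
    nablaD (f * g) h t
      = nablaD f h t * g t + f t * nablaD g h t - h * (nablaD f h t * nablaD g h t) := by
  simp only [nablaD_eq_deltaD_neg, deltaD_mul f g t (neg_ne_zero.mpr hh)]; ring

lemma scaleD_mul (hh : h ≠ 0) :
    scaleD (f * g) h t = scaleD f h t * g t + f t * scaleD g h t
      + h * ((1 + I) / 2 * (deltaD f h t * deltaD g h t)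
        - (1 - I) / 2 * (nablaD f h t * nablaD g h t)) := by
  simp only [scaleD_eq_deltaD_add_nablaD, deltaD_mul f g t hh, nablaD_mul f g t hh]; push_cast; ring

lemma norm_scaleD_mul_sub_le (hh : 0 < h) :
    ‖scaleD (f * g) h t - (scaleD f h t * g t + f t * scaleD g h t)‖
      ≤ 8 * h * (‖scaleD f h t‖ * ‖scaleD g h t‖) := by
  have hterm : ∀ z : ℂ, ‖z‖ ≤ 1 → ∀ x y : ℝ,
      |x| ≤ 2 * ‖scaleD f h t‖ → |y| ≤ 2 * ‖scaleD g h t‖ →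
      ‖z * (x * y)‖ ≤ 4 * (‖scaleD f h t‖ * ‖scaleD g h t‖) := by
    intro z hz x y hx hy
    rw [norm_mul, norm_mul, Complex.norm_real, Complex.norm_real, Real.norm_eq_abs,
      Real.norm_eq_abs]
    calc ‖z‖ * (|x| * |y|) ≤ 1 * ((2 * ‖scaleD f h t‖) * (2 * ‖scaleD g h t‖)) := by gcongr
      _ = _ := by ring
  have hplus : ‖(1 + I) / 2‖ ≤ 1 := by
    rw [norm_div, Complex.norm_two, div_le_one two_pos]
    exact (norm_add_le _ _).trans (by norm_num)
  have hminus : ‖(1 - I) / 2‖ ≤ 1 := by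
    rw [norm_div, Complex.norm_two, div_le_one two_pos]
    exact (norm_sub_le _ _).trans (by norm_num)
  rw [scaleD_mul f g t hh.ne', add_sub_cancel_left, norm_mul, Complex.norm_real,
    Real.norm_of_nonneg hh.le, mul_comm 8 h, mul_assoc]
  refine mul_le_mul_of_nonneg_left ((norm_sub_le _ _).trans ?_) hh.le
  linarith [hterm _ hplus _ _ (abs_deltaD_le_two_mul_norm_scaleD f h t)
      (abs_deltaD_le_two_mul_norm_scaleD g h t),
    hterm _ hminus _ _ (abs_nablaD_le_two_mul_norm_scaleD f h t)
      (abs_nablaD_le_two_mul_norm_scaleD g h t)]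

end Algebra

section Analysis

variable {f g P : ℝ → ℝ} {S : Set ℝ} {a b c h : ℝ}

lemma ContinuousOn.deltaD {u : Set ℝ} (hf : ContinuousOn f S) (hu : u ⊆ S)
    (hshift : MapsTo (· + h) u S) : ContinuousOn (deltaD f h) u :=
  ((hf.comp (continuous_add_const h).continuousOn hshift).sub (hf.mono hu)).div_const h

lemma eventually_add_mem (hSo : IsOpen S) (hc : c ∈ S) : ∀ᶠ h in 𝓝 0, c + h ∈ S :=
  (continuous_const_add c).continuousAt.preimage_mem_nhds (by simpa using hSo.mem_nhds hc)

lemma eventually_mapsTo_add_uIcc (hSo : IsOpen S) (hS : S.OrdConnected) (ha : a ∈ S)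
    (hb : b ∈ S) : ∀ᶠ h in 𝓝 0, MapsTo (· + h) (uIcc a b) S := by
  filter_upwards [eventually_add_mem hSo ha, eventually_add_mem hSo hb] with h ha' hb' t ht
  refine hS.uIcc_subset ha' hb' ?_
  rw [← image_add_const_uIcc]
  exact mem_image_of_mem _ ht

lemma eventually_continuousOn_deltaD (hSo : IsOpen S) (hS : S.OrdConnected)
    (hf : ContinuousOn f S) (ha : a ∈ S) (hb : b ∈ S) :
    ∀ᶠ h in 𝓝 0, ContinuousOn (deltaD f h) (uIcc a b) := by
  filter_upwards [eventually_mapsTo_add_uIcc hSo hS ha hb] with h hh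
  exact hf.deltaD (hS.uIcc_subset ha hb) hh

lemma eventually_continuousOn_nablaD (hSo : IsOpen S) (hS : S.OrdConnected)
    (hf : ContinuousOn f S) (ha : a ∈ S) (hb : b ∈ S) :
    ∀ᶠ h in 𝓝 0, ContinuousOn (nablaD f h) (uIcc a b) := by
  have := tendsto_neg (0 : ℝ)
  rw [neg_zero] at this
  filter_upwards [this.eventually (eventually_continuousOn_deltaD hSo hS hf ha hb)] with h hh
  rwa [nablaD_eq_deltaD_neg]

lemma eventually_continuousOn_scaleD (hSo : IsOpen S) (hS : S.OrdConnected)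
    (hf : ContinuousOn f S) (ha : a ∈ S) (hb : b ∈ S) :
    ∀ᶠ h in 𝓝 0, ContinuousOn (scaleD f h) (uIcc a b) := by
  filter_upwards [eventually_continuousOn_deltaD hSo hS hf ha hb,
    eventually_continuousOn_nablaD hSo hS hf ha hb] with h hdelta hnabla
  simp only [funext (scaleD_eq_deltaD_add_nablaD f h)]
  fun_prop

lemma tendsto_integral_add_div (hSo : IsOpen S) (hP : ContinuousOn P S) (hc : c ∈ S) :
    Tendsto (fun h => (∫ t in c..c + h, P t) / h) (𝓝[≠] 0) (𝓝 (P c)) := by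
  have hderiv : HasDerivAt (fun u => ∫ t in c..u, P t) (P c) c :=
    intervalIntegral.integral_hasDerivAt_right IntervalIntegrable.refl
      (hP.stronglyMeasurableAtFilter hSo c hc) (hP.continuousAt (hSo.mem_nhds hc))
  simpa [div_eq_inv_mul] using hderiv.tendsto_slope_zero

lemma integral_deltaD (hS : S.OrdConnected) (hP : ContinuousOn P S) (ha : a ∈ S) (hb : b ∈ S)
    (ha' : a + h ∈ S) (hb' : b + h ∈ S) :
    ∫ t in a..b, deltaD P h t = ((∫ t in b..b + h, P t) - ∫ t in a..a + h, P t) / h := by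
  have hint : ∀ u ∈ S, ∀ v ∈ S, IntervalIntegrable P volume u v := fun u hu v hv =>
    (hP.mono (hS.uIcc_subset hu hv)).intervalIntegrable
  have hshift : IntervalIntegrable (fun t => P (t + h)) volume a b := by
    simpa using (hint _ ha' _ hb').comp_add_right h
  simp only [deltaD]
  rw [intervalIntegral.integral_div, intervalIntegral.integral_sub hshift (hint _ ha _ hb),
    intervalIntegral.integral_comp_add_right,
    intervalIntegral.integral_interval_sub_interval_comm' (hint _ ha' _ hb') (hint _ ha _ hb)
      (hint _ ha' _ ha)]

lemma tendsto_integral_deltaD (hSo : IsOpen S) (hS : S.OrdConnected) (hP : ContinuousOn P S)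
    (ha : a ∈ S) (hb : b ∈ S) :
    Tendsto (fun h => ∫ t in a..b, deltaD P h t) (𝓝[≠] 0) (𝓝 (P b - P a)) := by
  refine ((tendsto_integral_add_div hSo hP hb).sub
    (tendsto_integral_add_div hSo hP ha)).congr' ?_
  filter_upwards [nhdsWithin_le_nhds (eventually_add_mem hSo ha),
    nhdsWithin_le_nhds (eventually_add_mem hSo hb)] with h ha' hb'
  rw [integral_deltaD hS hP ha hb ha' hb', sub_div]

lemma tendsto_integral_nablaD (hSo : IsOpen S) (hS : S.OrdConnected) (hP : ContinuousOn P S)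
    (ha : a ∈ S) (hb : b ∈ S) :
    Tendsto (fun h => ∫ t in a..b, nablaD P h t) (𝓝[≠] 0) (𝓝 (P b - P a)) := by
  simp only [nablaD_eq_deltaD_neg]
  have hneg : Tendsto Neg.neg (𝓝[≠] (0 : ℝ)) (𝓝[≠] 0) := by
    have := Filter.neg_nhdsNE (a := (0 : ℝ))
    rw [neg_zero] at this
    exact this.le
  exact (tendsto_integral_deltaD hSo hS hP ha hb).comp hneg

lemma tendsto_integral_scaleD (hSo : IsOpen S) (hS : S.OrdConnected) (hP : ContinuousOn P S)
    (ha : a ∈ S) (hb : b ∈ S) :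
    Tendsto (fun h => ∫ t in a..b, scaleD P h t) (𝓝[≠] 0) (𝓝 ((P b - P a : ℝ) : ℂ)) := by
  have hdelta := (continuous_ofReal.tendsto _).comp (tendsto_integral_deltaD hSo hS hP ha hb)
  have hnabla := (continuous_ofReal.tendsto _).comp (tendsto_integral_nablaD hSo hS hP ha hb)
  have hlim := (hdelta.const_mul ((1 + I) / 2)).add (hnabla.const_mul ((1 - I) / 2))
  rw [← add_mul, show (1 + I) / 2 + (1 - I) / 2 = 1 by ring, one_mul] at hlim
  refine hlim.congr' ?_
  filter_upwards [nhdsWithin_le_nhds (eventually_continuousOn_deltaD hSo hS hP ha hb),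
    nhdsWithin_le_nhds (eventually_continuousOn_nablaD hSo hS hP ha hb)] with h hdelta hnabla
  simp only [Function.comp_apply, scaleD_eq_deltaD_add_nablaD]
  rw [intervalIntegral.integral_add, intervalIntegral.integral_const_mul,
    intervalIntegral.integral_const_mul, intervalIntegral.integral_ofReal,
    intervalIntegral.integral_ofReal]
  · exact (continuous_ofReal.comp_continuousOn hdelta).intervalIntegrable.const_mul _
  · exact (continuous_ofReal.comp_continuousOn hnabla).intervalIntegrable.const_mul _

lemma tendsto_integral_mul_of_dominated {ι : Type*} {l : Filter ι} [l.IsCountablyGenerated]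
    {u : ι → ℝ → ℂ} {U v : ℝ → ℂ} {M : ℝ}
    (hu : ∀ᶠ i in l, ContinuousOn (u i) (uIcc a b))
    (hbound : ∀ᶠ i in l, ∀ t ∈ uIcc a b, ‖u i t‖ ≤ M)
    (hlim : ∀ t ∈ uIcc a b, Tendsto (u · t) l (𝓝 (U t))) (hv : ContinuousOn v (uIcc a b)) :
    Tendsto (fun i => ∫ t in a..b, u i t * v t) l (𝓝 (∫ t in a..b, U t * v t)) := by
  refine intervalIntegral.tendsto_integral_filter_of_dominated_convergence (fun t => M * ‖v t‖)
    ?_ ?_ (continuousOn_const.mul hv.norm).intervalIntegrable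
    (ae_of_all _ fun t ht => (hlim t (uIoc_subset_uIcc ht)).mul_const _)
  · filter_upwards [hu] with i hi
    exact ((hi.mul hv).mono uIoc_subset_uIcc).aestronglyMeasurable measurableSet_uIoc
  · filter_upwards [hbound] with i hi
    refine ae_of_all _ fun t ht => ?_
    rw [norm_mul]
    exact mul_le_mul_of_nonneg_right (hi t (uIoc_subset_uIcc ht)) (norm_nonneg _)

lemma tendsto_integral_scaleD_mul_add_mul_scaleD (hSo : IsOpen S) (hS : S.OrdConnected)
    (hf : ContinuousOn f S) (hg : ContinuousOn g S) (ha : a ∈ S) (hb : b ∈ S) {M : ℝ}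
    (hbound : ∀ᶠ h in 𝓝[>] 0, ∀ t ∈ uIcc a b, ‖scaleD f h t‖ ≤ M ∧ ‖scaleD g h t‖ ≤ M) :
    Tendsto (fun h => (∫ t in a..b, scaleD f h t * g t) + ∫ t in a..b, (f t : ℂ) * scaleD g h t)
      (𝓝[>] 0) (𝓝 ((f b * g b - f a * g a : ℝ) : ℂ)) := by
  have hsub : uIcc a b ⊆ S := hS.uIcc_subset ha hb
  have hcont : ∀ φ : ℝ → ℝ, ContinuousOn φ S →
      ∀ᶠ h in 𝓝[>] 0, ContinuousOn (scaleD φ h) (uIcc a b) := fun φ hφ =>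
    nhdsWithin_le_nhds (eventually_continuousOn_scaleD hSo hS hφ ha hb)
  have hprod := (tendsto_integral_scaleD hSo hS (hf.mul hg) ha hb).mono_left
    (nhdsGT_le_nhdsNE 0)
  have hsmall : Tendsto (fun h : ℝ => 8 * h * (M * M) * |b - a|) (𝓝[>] 0) (𝓝 0) := by
    have hlin : Continuous fun h : ℝ => 8 * h * (M * M) * |b - a| := by fun_prop
    simpa using (hlin.tendsto 0).mono_left nhdsWithin_le_nhds
  have hrem : Tendsto (fun h => (∫ t in a..b, scaleD (f * g) h t)
      - ((∫ t in a..b, scaleD f h t * g t) + ∫ t in a..b, (f t : ℂ) * scaleD g h t))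
      (𝓝[>] 0) (𝓝 0) := by
    refine squeeze_zero_norm' ?_ hsmall
    filter_upwards [self_mem_nhdsWithin, hbound, hcont f hf, hcont g hg, hcont _ (hf.mul hg)]
      with h (hh : 0 < h) hM hcf hcg hcfg
    have hfc := continuous_ofReal.comp_continuousOn (hf.mono hsub)
    have hgc := continuous_ofReal.comp_continuousOn (hg.mono hsub)
    have hFg : IntervalIntegrable (fun t => scaleD f h t * g t) volume a b :=
      (hcf.mul hgc).intervalIntegrable
    have hfG : IntervalIntegrable (fun t => (f t : ℂ) * scaleD g h t) volume a b :=
      (hfc.mul hcg).intervalIntegrable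
    rw [← intervalIntegral.integral_add hFg hfG,
      ← intervalIntegral.integral_sub hcfg.intervalIntegrable (hFg.add hfG)]
    refine intervalIntegral.norm_integral_le_of_norm_le_const fun t ht => ?_
    obtain ⟨hMf, hMg⟩ := hM t (uIoc_subset_uIcc ht)
    refine (norm_scaleD_mul_sub_le f g t hh).trans ?_
    gcongr
    exact (norm_nonneg _).trans hMf
  simpa using hprod.sub hrem

end Analysis

theorem stmt_8_general (a b δ : ℝ) (hab : a < b) (hδ : 0 < δ)
    (f g : ℝ → ℝ)
    (hfc : ContinuousOn f (Set.Icc (a - δ) (b + δ)))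
    (hgc : ContinuousOn g (Set.Icc (a - δ) (b + δ)))
    (F G : ℝ → ℂ) (M : ℝ)
    (hF : ∀ t ∈ Set.Icc a b,
      Tendsto (fun h : ℝ => scaleD f h t) (nhdsWithin 0 (Set.Ioi 0)) (nhds (F t)))
    (hG : ∀ t ∈ Set.Icc a b,
      Tendsto (fun h : ℝ => scaleD g h t) (nhdsWithin 0 (Set.Ioi 0)) (nhds (G t)))
    (hFb : ∀ t ∈ Set.Icc a b, ∀ h ∈ Set.Ioo (0 : ℝ) δ, ‖scaleD f h t‖ ≤ M)
    (hGb : ∀ t ∈ Set.Icc a b, ∀ h ∈ Set.Ioo (0 : ℝ) δ, ‖scaleD g h t‖ ≤ M) :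
    ∫ t in a..b, F t * (g t : ℂ)
      = (f b : ℂ) * (g b : ℂ) - (f a : ℂ) * (g a : ℂ) - ∫ t in a..b, (f t : ℂ) * G t := by
  rw [← uIcc_of_le hab.le] at hF hG hFb hGb
  have hf : ContinuousOn f (Ioo (a - δ) (b + δ)) := hfc.mono Ioo_subset_Icc_self
  have hg : ContinuousOn g (Ioo (a - δ) (b + δ)) := hgc.mono Ioo_subset_Icc_self
  have ha : a ∈ Ioo (a - δ) (b + δ) := ⟨by linarith, by linarith⟩
  have hb : b ∈ Ioo (a - δ) (b + δ) := ⟨by linarith, by linarith⟩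
  have hsmall : ∀ᶠ h in 𝓝[>] 0, h ∈ Ioo 0 δ := Ioo_mem_nhdsGT hδ
  have hcont : ∀ φ : ℝ → ℝ, ContinuousOn φ (Ioo (a - δ) (b + δ)) →
      ∀ᶠ h in 𝓝[>] 0, ContinuousOn (scaleD φ h) (uIcc a b) := fun φ hφ =>
    nhdsWithin_le_nhds (eventually_continuousOn_scaleD isOpen_Ioo ordConnected_Ioo hφ ha hb)
  have hsub : uIcc a b ⊆ Ioo (a - δ) (b + δ) := ordConnected_Ioo.uIcc_subset ha hb
  have hFg := tendsto_integral_mul_of_dominated (v := fun t => (g t : ℂ)) (hcont f hf)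
    (hsmall.mono fun h hh t ht => hFb t ht h hh) hF
    (continuous_ofReal.comp_continuousOn (hg.mono hsub))
  have hfG : Tendsto (fun h => ∫ t in a..b, (f t : ℂ) * scaleD g h t) (𝓝[>] 0)
      (𝓝 (∫ t in a..b, (f t : ℂ) * G t)) := by
    simpa only [mul_comm] using tendsto_integral_mul_of_dominated (v := fun t => (f t : ℂ))
      (hcont g hg) (hsmall.mono fun h hh t ht => hGb t ht h hh) hG
      (continuous_ofReal.comp_continuousOn (hf.mono hsub))
  have hsum := tendsto_integral_scaleD_mul_add_mul_scaleD isOpen_Ioo ordConnected_Ioo hf hg ha hb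
    (hsmall.mono fun h hh t ht => ⟨hFb t ht h hh, hGb t ht h hh⟩)
  have hparts := tendsto_nhds_unique (hFg.add hfG) hsum
  push_cast at hparts
  linear_combination hparts

/-- Integration by parts for the scale derivative (convergent case): with `f` `α`-Hölder,
`g` `β`-Hölder (`α+β>1`) and continuous on `[a−δ, b+δ]`, if `□_h f(t) → F(t)` and
`□_h g(t) → G(t)` as `h → 0⁺` for every `t ∈ [a,b]`, with the uniform bound `M`, then
`∫_a^b F·g = f(b)g(b) − f(a)g(a) − ∫_a^b f·G`. -/
theorem stmt_8 (a b δ α β : ℝ) (hab : a < b) (hδ : 0 < δ)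
    (hα : α ∈ Set.Ioo (0 : ℝ) 1) (hβ : β ∈ Set.Ioo (0 : ℝ) 1) (hαβ : 1 < α + β)
    (f g : ℝ → ℝ)
    (hfc : ContinuousOn f (Set.Icc (a - δ) (b + δ)))
    (hgc : ContinuousOn g (Set.Icc (a - δ) (b + δ)))
    (hf : ∃ C > (0 : ℝ), ∀ s ∈ Set.Icc (a - δ) (b + δ), ∀ u ∈ Set.Icc (a - δ) (b + δ),
      |f u - f s| ≤ C * |u - s| ^ α)
    (hg : ∃ C > (0 : ℝ), ∀ s ∈ Set.Icc (a - δ) (b + δ), ∀ u ∈ Set.Icc (a - δ) (b + δ),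
      |g u - g s| ≤ C * |u - s| ^ β)
    (F G : ℝ → ℂ) (M : ℝ) (hM : 0 < M)
    (hF : ∀ t ∈ Set.Icc a b,
      Tendsto (fun h : ℝ => scaleD f h t) (nhdsWithin 0 (Set.Ioi 0)) (nhds (F t)))
    (hG : ∀ t ∈ Set.Icc a b,
      Tendsto (fun h : ℝ => scaleD g h t) (nhdsWithin 0 (Set.Ioi 0)) (nhds (G t)))
    (hFb : ∀ t ∈ Set.Icc a b, ∀ h ∈ Set.Ioo (0 : ℝ) δ, ‖scaleD f h t‖ ≤ M)
    (hGb : ∀ t ∈ Set.Icc a b, ∀ h ∈ Set.Ioo (0 : ℝ) δ, ‖scaleD g h t‖ ≤ M) :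
    ∫ t in a..b, F t * (g t : ℂ)
      = (f b : ℂ) * (g b : ℂ) - (f a : ℂ) * (g a : ℂ) - ∫ t in a..b, (f t : ℂ) * G t :=
  stmt_8_general a b δ hab hδ f g hfc hgc F G M hF hG hFb hGb
end

section
/- (Herglotz principle with free right endpoint: transversality condition, differentiable case.) Let a < b, z_a ∈ ℝ, and let L : ℝ × ℝ × ℝ × ℝ → ℝ be of class C². Let x : ℝ → ℝ be of class C² and z : ℝ → ℝ be of class C¹ with z'(t) = L(t, x(t), x'(t), z(t)) for all t ∈ [a,b] and z(a) = z_a. Assume that for every C² function η : ℝ → ℝ with η(a) = 0 (η(b) arbitrary) there exists a function Z : ℝ × ℝ → ℝ of class C² such that: Z(0,t) = z(t) for all t ∈ [a,b]; ∂Z/∂t(ε,t) = L(t, x(t)+ε·η(t), x'(t)+ε·η'(t), Z(ε,t)) for all ε ∈ ℝ and t ∈ [a,b]; Z(ε,a) = z_a for all ε ∈ ℝ; and ∂Z/∂ε(0,b) = 0. Then for all t ∈ [a,b]: (d/dt)[∂₃L(t, x(t), x'(t), z(t))] = ∂₂L(t, x(t), x'(t), z(t)) + ∂₄L(t, x(t),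 x'(t), z(t))·∂₃L(t, x(t), x'(t), z(t)), and moreover the transversality condition ∂₃L(b, x(b), x'(b), z(b)) = 0 holds. -/
/-!
For a variation `η` with `η a = 0`, the derivative `ψ = ∂_ε Z(0, ·)` solves the linearized
equation `ψ' = ∂₂L η + ∂₃L η' + ∂₄L ψ` (differentiate `∂ₜZ = L(…)` in `ε` and swap the two
derivatives), with `ψ a = ψ b = 0`. With the integrating factor `R = exp (-∫ₐᵗ ∂₄L)`, the function
`R (ψ - ∂₃L η)` is a primitive of `R (∂₂L + ∂₄L ∂₃L - (∂₃L)') η`, so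
`∫ₐᵇ R (∂₂L + ∂₄L ∂₃L - (∂₃L)') η = -R(b) ∂₃L(b) η(b)`.
Variations that also vanish at `b` give the Herglotz equation by the fundamental lemma of the
calculus of variations, and then `η t = t - a` gives `∂₃L(b) = 0`.
-/

open Set MeasureTheory
open scoped ContDiff

theorem eqOn_zero_of_forall_intervalIntegral_mul_eq_zero {a b : ℝ} (hab : a < b) {g : ℝ → ℝ}
    (hg : ContinuousOn g (Icc a b))
    (h : ∀ η : ℝ → ℝ, ContDiff ℝ ∞ η → η a = 0 → η b = 0 → ∫ t in a..b, g t * η t = 0) :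
    EqOn g 0 (Icc a b) := by
  have hae : ∀ᵐ t, t ∈ Ioo a b → g t = 0 := by
    refine isOpen_Ioo.ae_eq_zero_of_integral_contDiff_smul_eq_zero
      ((hg.mono Ioo_subset_Icc_self).locallyIntegrableOn measurableSet_Ioo) fun η hη _ hsupp => ?_
    have hη0 : ∀ t ∉ Ioo a b, η t = 0 := fun t ht =>
      image_eq_zero_of_notMem_tsupport fun h => ht (hsupp h)
    rw [← h η hη (hη0 a (by simp)) (hη0 b (by simp)), intervalIntegral.integral_of_le hab.le,
      setIntegral_eq_integral_of_forall_compl_eq_zero fun t ht => ?_]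
    · simp only [smul_eq_mul, mul_comm]
    · rw [hη0 t fun h => ht (Ioo_subset_Ioc_self h), mul_zero]
  have hIoo : EqOn g 0 (Ioo a b) :=
    Measure.eqOn_open_of_ae_eq (μ := volume) ((ae_restrict_iff' measurableSet_Ioo).2 hae)
      isOpen_Ioo (hg.mono Ioo_subset_Icc_self) continuousOn_const
  exact hIoo.of_subset_closure hg continuousOn_const Ioo_subset_Icc_self
    (by rw [closure_Ioo hab.ne])

theorem eqOn_zero_and_eq_zero_of_forall_intervalIntegral_mul_eq {a b c : ℝ} (hab : a < b)
    {g : ℝ → ℝ} (hg : ContinuousOn g (Icc a b))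
    (h : ∀ η : ℝ → ℝ, ContDiff ℝ ∞ η → η a = 0 → ∫ t in a..b, g t * η t = -(c * η b)) :
    EqOn g 0 (Icc a b) ∧ c = 0 := by
  have hg0 : EqOn g 0 (Icc a b) := eqOn_zero_of_forall_intervalIntegral_mul_eq_zero hab hg
    fun η hη hηa hηb => by rw [h η hη hηa, hηb, mul_zero, neg_zero]
  refine ⟨hg0, ?_⟩
  have h₁ := h (fun t => t - a) (contDiff_id.sub contDiff_const) (sub_self a)
  rw [intervalIntegral.integral_congr (g := 0) fun t ht => by
    simp [hg0 (uIcc_of_le hab.le ▸ ht)]] at h₁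
  simpa [sub_ne_zero.2 hab.ne'] using h₁

section Slices

variable {F : ℝ × ℝ × ℝ × ℝ → ℝ} {t y v w : ℝ}

theorem deriv_slice₂ (hF : DifferentiableAt ℝ F (t, y, v, w)) :
    deriv (fun y' => F (t, y', v, w)) y = fderiv ℝ F (t, y, v, w) (0, 1, 0, 0) :=
  (hF.hasFDerivAt.comp_hasDerivAt y ((hasDerivAt_const y t).prodMk ((hasDerivAt_id y).prodMk
    ((hasDerivAt_const y v).prodMk (hasDerivAt_const y w))))).deriv

theorem deriv_slice₃ (hF : DifferentiableAt ℝ F (t, y, v, w)) :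
    deriv (fun v' => F (t, y, v', w)) v = fderiv ℝ F (t, y, v, w) (0, 0, 1, 0) :=
  (hF.hasFDerivAt.comp_hasDerivAt v ((hasDerivAt_const v t).prodMk ((hasDerivAt_const v y).prodMk
    ((hasDerivAt_id v).prodMk (hasDerivAt_const v w))))).deriv

theorem deriv_slice₄ (hF : DifferentiableAt ℝ F (t, y, v, w)) :
    deriv (fun w' => F (t, y, v, w')) w = fderiv ℝ F (t, y, v, w) (0, 0, 0, 1) :=
  (hF.hasFDerivAt.comp_hasDerivAt w ((hasDerivAt_const w t).prodMk ((hasDerivAt_const w y).prodMk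
    ((hasDerivAt_const w v).prodMk (hasDerivAt_id w))))).deriv

end Slices

theorem ContinuousLinearMap.apply_zero_tuple_eq (φ : ℝ × ℝ × ℝ × ℝ →L[ℝ] ℝ) (α β γ : ℝ) :
    φ (0, α, β, γ) = α * φ (0, 1, 0, 0) + β * φ (0, 0, 1, 0) + γ * φ (0, 0, 0, 1) := by
  have : ((0, α, β, γ) : ℝ × ℝ × ℝ × ℝ)
      = α • (0, 1, 0, 0) + β • (0, 0, 1, 0) + γ • (0, 0, 0, 1) := by
    simp
  rw [this, map_add, map_add, map_smul, map_smul, map_smul, smul_eq_mul, smul_eq_mul, smul_eq_mul]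

theorem hasDerivAt_deriv_fst_of_hasDerivAt_deriv_snd {W : ℝ × ℝ → ℝ} (hW : ContDiff ℝ 2 W)
    {ε t d : ℝ} (h : HasDerivAt (fun e => deriv (fun s => W (e, s)) t) d ε) :
    HasDerivAt (fun s => deriv (fun e => W (e, s)) ε) d t := by
  have hW1 : Differentiable ℝ W := hW.differentiable (by norm_num)
  have hW2 : Differentiable ℝ (fderiv ℝ W) :=
    (hW.fderiv_right (m := 1) (by norm_num)).differentiable (by norm_num)
  have hε : HasDerivAt (fun e : ℝ => (e, t)) ((1 : ℝ), (0 : ℝ)) ε :=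
    (hasDerivAt_id ε).prodMk (hasDerivAt_const ε t)
  have ht : ∀ e, HasDerivAt (fun s : ℝ => (e, s)) ((0 : ℝ), (1 : ℝ)) t := fun e =>
    (hasDerivAt_const t e).prodMk (hasDerivAt_id t)
  have hfst : (fun s => deriv (fun e => W (e, s)) ε) = fun s => fderiv ℝ W (ε, s) (1, 0) :=
    funext fun s => ((hW1 _).hasFDerivAt.comp_hasDerivAt ε
      ((hasDerivAt_id ε).prodMk (hasDerivAt_const ε s))).deriv
  have hsnd : (fun e => deriv (fun s => W (e, s)) t) = fun e => fderiv ℝ W (e, t) (0, 1) :=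
    funext fun e => ((hW1 _).hasFDerivAt.comp_hasDerivAt t (ht e)).deriv
  have hd : d = fderiv ℝ (fderiv ℝ W) (ε, t) (1, 0) (0, 1) := by
    have := ((hW2 _).hasFDerivAt.comp_hasDerivAt ε hε).clm_apply
      (hasDerivAt_const ε ((0 : ℝ), (1 : ℝ)))
    rw [hsnd] at h
    exact h.unique (by simpa using this)
  have hsymm := (hW.contDiffAt (x := (ε, t))).isSymmSndFDerivAt
    (by simp [minSmoothness_of_isRCLikeNormedField])
  rw [hfst, hd, hsymm]
  simpa using ((hW2 _).hasFDerivAt.comp_hasDerivAt t (ht ε)).clm_apply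
    (hasDerivAt_const t ((1 : ℝ), (0 : ℝ)))

theorem hasDerivAt_deriv_variation {F : ℝ × ℝ × ℝ × ℝ → ℝ} {Z : ℝ → ℝ → ℝ}
    (hZ : ContDiff ℝ 2 (fun p : ℝ × ℝ => Z p.1 p.2)) {t y u v u' : ℝ}
    (hF : DifferentiableAt ℝ F (t, y, v, Z 0 t))
    (hZt : ∀ ε, deriv (fun s => Z ε s) t = F (t, y + ε * u, v + ε * u', Z ε t)) :
    HasDerivAt (fun s => deriv (fun ε => Z ε s) 0)
      (fderiv ℝ F (t, y, v, Z 0 t) (0, u, u', deriv (fun ε => Z ε t) 0)) t := by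
  refine hasDerivAt_deriv_fst_of_hasDerivAt_deriv_snd (W := fun p : ℝ × ℝ => Z p.1 p.2) hZ ?_
  have hZε : HasDerivAt (fun ε => Z ε t) (deriv (fun ε => Z ε t) 0) 0 :=
    ((hZ.differentiable (by norm_num)).comp (differentiable_id.prodMk
      (differentiable_const t)) 0).hasDerivAt
  have hcurve : HasDerivAt (fun ε : ℝ => (t, y + ε * u, v + ε * u', Z ε t))
      ((0 : ℝ), u, u', deriv (fun ε => Z ε t) 0) 0 := by
    refine (hasDerivAt_const 0 t).prodMk (.prodMk ?_ (.prodMk ?_ hZε))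
    · simpa using ((hasDerivAt_id (0 : ℝ)).mul_const u).const_add y
    · simpa using ((hasDerivAt_id (0 : ℝ)).mul_const u').const_add v
  rw [show (fun e => deriv (fun s => Z e s) t) = _ from funext hZt]
  have hF' : HasFDerivAt F (fderiv ℝ F (t, y, v, Z 0 t)) (t, y + 0 * u, v + 0 * u', Z 0 t) := by
    simpa using hF.hasFDerivAt
  exact hF'.comp_hasDerivAt 0 hcurve

noncomputable def integratingFactor (r : ℝ → ℝ) (a t : ℝ) : ℝ :=
  Real.exp (-∫ s in a..t, r s)

theorem hasDerivAt_integratingFactor {r : ℝ → ℝ} (hr : Continuous r) (a t : ℝ) :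
    HasDerivAt (integratingFactor r a) (-r t * integratingFactor r a t) t := by
  have := (intervalIntegral.integral_hasDerivAt_right (hr.intervalIntegrable a t)
    (hr.stronglyMeasurableAtFilter volume _) hr.continuousAt).neg.exp
  exact this.congr_deriv (mul_comm _ _)

theorem continuous_integratingFactor {r : ℝ → ℝ} (hr : Continuous r) (a : ℝ) :
    Continuous (integratingFactor r a) :=
  continuous_iff_continuousAt.2 fun t => (hasDerivAt_integratingFactor hr a t).continuousAt

theorem integratingFactor_pos (r : ℝ → ℝ) (a t : ℝ) : 0 < integratingFactor r a t :=
  Real.exp_pos _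

/-- `t ↦ R t * (ψ t - p t * η t)`, where `R = integratingFactor r a`, is a primitive of the
integrand. -/
theorem integral_integratingFactor_mul_eq {a b : ℝ} {p q r η ψ : ℝ → ℝ} (hp : ContDiff ℝ 1 p)
    (hq : Continuous q) (hr : Continuous r) (hη : ContDiff ℝ 1 η)
    (hψ : ∀ t ∈ uIcc a b, HasDerivAt ψ (q t * η t + p t * deriv η t + r t * ψ t) t) :
    ∫ t in a..b, integratingFactor r a t * (q t + r t * p t - deriv p t) * η t
      = integratingFactor r a b * (ψ b - p b * η b)
        - integratingFactor r a a * (ψ a - p a * η a) := by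
  have hR := continuous_integratingFactor hr a
  have hp' := hp.continuous_deriv le_rfl
  have hηc := hη.continuous
  apply intervalIntegral.integral_eq_sub_of_hasDerivAt (fun t ht => ?_)
  · exact Continuous.intervalIntegrable (by fun_prop) a b
  have hpt := (hp.differentiable one_ne_zero t).hasDerivAt
  have hηt := (hη.differentiable one_ne_zero t).hasDerivAt
  exact ((hasDerivAt_integratingFactor hr a t).mul ((hψ t ht).sub (hpt.mul hηt))).congr_deriv
    (by simp only [Pi.sub_apply, Pi.mul_apply]; ring)

section Herglotz

variable {F : ℝ × ℝ × ℝ × ℝ → ℝ} {x z : ℝ → ℝ}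

/-- The directions `e = (0, 1, 0, 0), (0, 0, 1, 0), (0, 0, 0, 1)` give `∂₂F, ∂₃F, ∂₄F` along
`t ↦ (t, x t, x' t, z t)`. -/
noncomputable def partialAlong (F : ℝ × ℝ × ℝ × ℝ → ℝ) (x z : ℝ → ℝ) (e : ℝ × ℝ × ℝ × ℝ)
    (t : ℝ) : ℝ :=
  fderiv ℝ F (t, x t, deriv x t, z t) e

noncomputable def herglotzResidual (F : ℝ × ℝ × ℝ × ℝ → ℝ) (x z : ℝ → ℝ) (t : ℝ) : ℝ :=
  partialAlong F x z (0, 1, 0, 0) t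
    + partialAlong F x z (0, 0, 0, 1) t * partialAlong F x z (0, 0, 1, 0) t
    - deriv (partialAlong F x z (0, 0, 1, 0)) t

theorem contDiff_partialAlong (hF : ContDiff ℝ 2 F) (hx : ContDiff ℝ 2 x) (hz : ContDiff ℝ 1 z)
    (e : ℝ × ℝ × ℝ × ℝ) : ContDiff ℝ 1 (partialAlong F x z e) := by
  have hx' : ContDiff ℝ 1 (deriv x) := hx.deriv'
  have hcurve : ContDiff ℝ 1 fun t => (t, x t, deriv x t, z t) :=
    contDiff_id.prodMk ((hx.of_le (by norm_num)).prodMk (hx'.prodMk hz))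
  exact ((hF.fderiv_right (m := 1) (by norm_num)).comp hcurve).clm_apply contDiff_const

theorem continuous_herglotzResidual (hF : ContDiff ℝ 2 F) (hx : ContDiff ℝ 2 x)
    (hz : ContDiff ℝ 1 z) : Continuous (herglotzResidual F x z) := by
  have hp := contDiff_partialAlong hF hx hz
  have hp' := (hp (0, 0, 1, 0)).continuous_deriv le_rfl
  have := (hp (0, 1, 0, 0)).continuous
  have := (hp (0, 0, 0, 1)).continuous
  have := (hp (0, 0, 1, 0)).continuous
  unfold herglotzResidual
  fun_prop

theorem integral_herglotzResidual_mul_eq {a b za : ℝ} (hab : a ≤ b) (hF : ContDiff ℝ 2 F)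
    (hx : ContDiff ℝ 2 x) (hz : ContDiff ℝ 1 z) {η : ℝ → ℝ} (hη : ContDiff ℝ 1 η) (hηa : η a = 0)
    {Z : ℝ → ℝ → ℝ} (hZ : ContDiff ℝ 2 (fun p : ℝ × ℝ => Z p.1 p.2))
    (hZ0 : ∀ t ∈ Icc a b, Z 0 t = z t)
    (hZt : ∀ ε, ∀ t ∈ Icc a b,
      deriv (fun s => Z ε s) t = F (t, x t + ε * η t, deriv x t + ε * deriv η t, Z ε t))
    (hZa : ∀ ε, Z ε a = za) (hZb : deriv (fun ε => Z ε b) 0 = 0) :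
    ∫ t in a..b, integratingFactor (partialAlong F x z (0, 0, 0, 1)) a t
        * herglotzResidual F x z t * η t
      = -(integratingFactor (partialAlong F x z (0, 0, 0, 1)) a b
        * partialAlong F x z (0, 0, 1, 0) b * η b) := by
  set ψ := fun s => deriv (fun ε => Z ε s) 0
  have hψ : ∀ t ∈ uIcc a b, HasDerivAt ψ (partialAlong F x z (0, 1, 0, 0) t * η t
      + partialAlong F x z (0, 0, 1, 0) t * deriv η t
      + partialAlong F x z (0, 0, 0, 1) t * ψ t) t := by
    intro t ht
    rw [uIcc_of_le hab] at ht
    have := hasDerivAt_deriv_variation hZ ((hF.differentiable (by norm_num)) _) (hZt · t ht)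
    rw [hZ0 t ht, ContinuousLinearMap.apply_zero_tuple_eq] at this
    convert this using 1
    simp only [partialAlong]
    ring
  have hψa : ψ a = 0 := by simp [ψ, hZa]
  have hp := contDiff_partialAlong hF hx hz
  unfold herglotzResidual
  rw [integral_integratingFactor_mul_eq (hp _) (hp _).continuous (hp _).continuous hη hψ]
  simp only [ψ, hψa, hZb, hηa]
  ring

end Herglotz

theorem stmt_12_general (a b z_a : ℝ) (hab : a < b)
    (L : ℝ → ℝ → ℝ → ℝ → ℝ)
    (hL : ContDiff ℝ 2 (fun p : ℝ × ℝ × ℝ × ℝ => L p.1 p.2.1 p.2.2.1 p.2.2.2))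
    (x z : ℝ → ℝ) (hx : ContDiff ℝ 2 x) (hz : ContDiff ℝ 1 z)
    (hvar : ∀ η : ℝ → ℝ, ContDiff ℝ 2 η → η a = 0 →
      ∃ Z : ℝ → ℝ → ℝ,
        ContDiff ℝ 2 (fun p : ℝ × ℝ => Z p.1 p.2) ∧
        (∀ t ∈ Set.Icc a b, Z 0 t = z t) ∧
        (∀ ε : ℝ, ∀ t ∈ Set.Icc a b,
          deriv (fun s => Z ε s) t
            = L t (x t + ε * η t) (deriv x t + ε * deriv η t) (Z ε t)) ∧
        (∀ ε : ℝ, Z ε a = z_a) ∧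
        deriv (fun ε => Z ε b) 0 = 0) :
    (∀ t ∈ Set.Icc a b,
      deriv (fun s => deriv (fun v => L s (x s) v (z s)) (deriv x s)) t
        = deriv (fun y => L t y (deriv x t) (z t)) (x t)
          + deriv (fun w => L t (x t) (deriv x t) w) (z t)
            * deriv (fun v => L t (x t) v (z t)) (deriv x t)) ∧
    deriv (fun v => L b (x b) v (z b)) (deriv x b) = 0 := by
  set F := fun p : ℝ × ℝ × ℝ × ℝ => L p.1 p.2.1 p.2.2.1 p.2.2.2
  have hF : Differentiable ℝ F := hL.differentiable (by norm_num)
  set R := integratingFactor (partialAlong F x z (0, 0, 0, 1)) a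
  have hfirst : ∀ η : ℝ → ℝ, ContDiff ℝ 2 η → η a = 0 →
      ∫ t in a..b, R t * herglotzResidual F x z t * η t
        = -(R b * partialAlong F x z (0, 0, 1, 0) b * η b) := by
    intro η hη hηa
    obtain ⟨Z, hZ, hZ0, hZt, hZa, hZb⟩ := hvar η hη hηa
    exact integral_herglotzResidual_mul_eq hab.le hL hx hz (hη.of_le (by norm_num)) hηa hZ hZ0
      hZt hZa hZb
  obtain ⟨hres, htransversal⟩ := eqOn_zero_and_eq_zero_of_forall_intervalIntegral_mul_eq hab
    ((continuous_integratingFactor (contDiff_partialAlong hL hx hz _).continuous a).mul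
      (continuous_herglotzResidual hL hx hz)).continuousOn
    fun η hη hηa => hfirst η (hη.of_le (WithTop.coe_le_coe.2 le_top)) hηa
  have h₂ : ∀ t, deriv (fun y => L t y (deriv x t) (z t)) (x t)
      = partialAlong F x z (0, 1, 0, 0) t := fun t => deriv_slice₂ (hF _)
  have h₃ : ∀ t, deriv (fun v => L t (x t) v (z t)) (deriv x t)
      = partialAlong F x z (0, 0, 1, 0) t := fun t => deriv_slice₃ (hF _)
  have h₄ : ∀ t, deriv (fun w => L t (x t) (deriv x t) w) (z t)
      = partialAlong F x z (0, 0, 0, 1) t := fun t => deriv_slice₄ (hF _)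
  refine ⟨fun t ht => ?_, ?_⟩
  · have hresidual : herglotzResidual F x z t = 0 :=
      (mul_eq_zero.1 (hres ht)).resolve_left (integratingFactor_pos _ _ _).ne'
    rw [funext h₃, h₂, h₃, h₄]
    exact (sub_eq_zero.1 hresidual).symm
  · rw [h₃]
    exact (mul_eq_zero.1 htransversal).resolve_left (integratingFactor_pos _ _ _).ne'

/-- Herglotz principle with free right endpoint (differentiable case): under the same
assumptions as the fixed-endpoint problem but with variations only required to vanish
at `t = a`, the Herglotz–Euler–Lagrange equation holds on `[a,b]` together with the
transversality condition `∂₃L(b, x(b), x'(b), z(b)) = 0`. -/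
theorem stmt_12 (a b z_a : ℝ) (hab : a < b)
    (L : ℝ → ℝ → ℝ → ℝ → ℝ)
    (hL : ContDiff ℝ 2 (fun p : ℝ × ℝ × ℝ × ℝ => L p.1 p.2.1 p.2.2.1 p.2.2.2))
    (x z : ℝ → ℝ) (hx : ContDiff ℝ 2 x) (hz : ContDiff ℝ 1 z)
    (hzeq : ∀ t ∈ Set.Icc a b, deriv z t = L t (x t) (deriv x t) (z t))
    (hza : z a = z_a)
    (hvar : ∀ η : ℝ → ℝ, ContDiff ℝ 2 η → η a = 0 →
      ∃ Z : ℝ → ℝ → ℝ,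
        ContDiff ℝ 2 (fun p : ℝ × ℝ => Z p.1 p.2) ∧
        (∀ t ∈ Set.Icc a b, Z 0 t = z t) ∧
        (∀ ε : ℝ, ∀ t ∈ Set.Icc a b,
          deriv (fun s => Z ε s) t
            = L t (x t + ε * η t) (deriv x t + ε * deriv η t) (Z ε t)) ∧
        (∀ ε : ℝ, Z ε a = z_a) ∧
        deriv (fun ε => Z ε b) 0 = 0) :
    (∀ t ∈ Set.Icc a b,
      deriv (fun s => deriv (fun v => L s (x s) v (z s)) (deriv x s)) t
        = deriv (fun y => L t y (deriv x t) (z t)) (x t)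
          + deriv (fun w => L t (x t) (deriv x t) w) (z t)
            * deriv (fun v => L t (x t) v (z t)) (deriv x t)) ∧
    deriv (fun v => L b (x b) v (z b)) (deriv x b) = 0 :=
  stmt_12_general a b z_a hab L hL x z hx hz hvar
end

section
/- (Multi-dimensional Herglotz principle, differentiable case.) Let n ≥ 1, a < b, z_a ∈ ℝ, and let L : ℝ × ℝⁿ × ℝⁿ × ℝ → ℝ be of class C². Let x : ℝ → ℝⁿ be of class C² and z : ℝ → ℝ be of class C¹ with z'(t) = L(t, x(t), x'(t), z(t)) for all t ∈ [a,b] and z(a) = z_a. Assume that for every C² function η : ℝ → ℝⁿ with η(a) = η(b) = 0 there exists a function Z : ℝ × ℝ → ℝ of class C² such that: Z(0,t) = z(t) for all t ∈ [a,b]; ∂Z/∂t(ε,t) = L(t, x(t)+ε·η(t), x'(t)+ε·η'(t), Z(ε,t)) for all ε ∈ ℝ and t ∈ [a,b]; Z(ε,a) = z_a for all ε ∈ ℝ; and ∂Z/∂ε(0,b) = 0. Then for every i ∈ {1,…,n} and all t ∈ [a,b]: (d/dt)[∂L/∂v_i(t, x(t), x'(t), z(t))] = ∂L/∂x_i(t,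 x(t), x'(t), z(t)) + ∂L/∂z(t, x(t), x'(t), z(t))·∂L/∂v_i(t, x(t), x'(t), z(t)). -/
/-!
Perturb `x` by `η = φ • eᵢ`, with `φ` a bump function supported in `(a, b)`. Differentiating
`∂ₜZ(ε, t) = L(t, x + εη, x' + εη', Z(ε, t))` in `ε` at `0` and swapping the two derivatives shows
that `ζ = ∂_εZ(0, ·)` solves the linear equation `ζ' = φ ∂ₓᵢL + φ' ∂ᵥᵢL + ∂_zL ζ` with
`ζ(a) = ζ(b) = 0`. With the integrating factor `μ(t) = exp (-∫ₐᵗ ∂_zL)` this gives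
`∫ₐᵇ μ (φ ∂ₓᵢL + φ' ∂ᵥᵢL) = 0`, and after an integration by parts
`∫ₐᵇ φ μ ((∂ᵥᵢL)' - ∂ₓᵢL - ∂_zL ∂ᵥᵢL) = 0` for every bump `φ`. By the fundamental lemma of the
calculus of variations the continuous factor `μ ((∂ᵥᵢL)' - ∂ₓᵢL - ∂_zL ∂ᵥᵢL)` vanishes on `[a, b]`,
and `μ > 0`.
-/

open MeasureTheory Set intervalIntegral Real
open scoped ContDiff

variable {E F : Type*} [NormedAddCommGroup E] [NormedSpace ℝ E] [NormedAddCommGroup F]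
  [NormedSpace ℝ F]

theorem eqOn_zero_of_forall_integral_mul_eq_zero {a b : ℝ} (hab : a < b) {g : ℝ → ℝ}
    (hg : Continuous g)
    (h : ∀ φ : ℝ → ℝ, ContDiff ℝ ∞ φ → tsupport φ ⊆ Ioo a b → ∫ s in a..b, φ s * g s = 0) :
    EqOn g 0 (Icc a b) := by
  have hae : ∀ᵐ s, s ∈ Ioo a b → g s = 0 := by
    refine isOpen_Ioo.ae_eq_zero_of_integral_contDiff_smul_eq_zero
      (hg.locallyIntegrable.locallyIntegrableOn _) fun φ hφ _ hsupp => ?_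
    have hzero : ∀ s ∉ Ioc a b, φ s * g s = 0 := fun s hs => by
      rw [image_eq_zero_of_notMem_tsupport fun h => hs (Ioo_subset_Ioc_self (hsupp h)),
        zero_mul]
    rw [← h φ hφ hsupp, integral_of_le hab.le,
      setIntegral_eq_integral_of_forall_compl_eq_zero hzero]
    rfl
  have hIoo : EqOn g 0 (Ioo a b) :=
    Measure.eqOn_open_of_ae_eq ((ae_restrict_iff' measurableSet_Ioo).2 hae) isOpen_Ioo
      hg.continuousOn continuousOn_const
  rw [← closure_Ioo hab.ne]
  exact hIoo.closure hg continuous_const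

theorem hasDerivAt_exp_neg_integral {c : ℝ → ℝ} (hc : Continuous c) (a s : ℝ) :
    HasDerivAt (fun t => exp (-∫ u in a..t, c u)) (exp (-∫ u in a..s, c u) * -c s) s :=
  ((integral_hasDerivAt_right (hc.intervalIntegrable a s)
    hc.stronglyMeasurable.stronglyMeasurableAtFilter hc.continuousAt).neg).exp

theorem continuous_exp_neg_integral {c : ℝ → ℝ} (hc : Continuous c) (a : ℝ) :
    Continuous fun t => exp (-∫ u in a..t, c u) :=
  continuous_iff_continuousAt.2 fun s => (hasDerivAt_exp_neg_integral hc a s).continuousAt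

theorem integral_exp_neg_integral_mul_eq_zero {a b : ℝ} (hab : a ≤ b) {c f ζ : ℝ → ℝ}
    (hc : Continuous c) (hf : Continuous f)
    (hζ : ∀ s ∈ Icc a b, HasDerivAt ζ (f s + c s * ζ s) s) (ha : ζ a = 0) (hb : ζ b = 0) :
    ∫ s in a..b, exp (-∫ u in a..s, c u) * f s = 0 := by
  have hμζ : ∀ s ∈ uIcc a b, HasDerivAt (fun t => exp (-∫ u in a..t, c u) * ζ t)
      (exp (-∫ u in a..s, c u) * f s) s := by
    intro s hs
    rw [uIcc_of_le hab] at hs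
    refine ((hasDerivAt_exp_neg_integral hc a s).mul (hζ s hs)).congr_deriv ?_
    ring
  rw [integral_eq_sub_of_hasDerivAt hμζ
    (((continuous_exp_neg_integral hc a).mul hf).intervalIntegrable a b), ha, hb]
  simp

theorem integral_mul_herglotz_residual_eq_zero {a b : ℝ} (hab : a ≤ b) {φ lx lv lz ζ : ℝ → ℝ}
    (hφ : ContDiff ℝ 1 φ) (hφa : φ a = 0) (hφb : φ b = 0)
    (hlx : Continuous lx) (hlv : ContDiff ℝ 1 lv) (hlz : Continuous lz)
    (hζ : ∀ s ∈ Icc a b, HasDerivAt ζ (φ s * lx s + deriv φ s * lv s + lz s * ζ s) s)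
    (hζa : ζ a = 0) (hζb : ζ b = 0) :
    ∫ s in a..b, φ s * (exp (-∫ u in a..s, lz u) * (deriv lv s - lx s - lz s * lv s)) = 0 := by
  set μ : ℝ → ℝ := fun s => exp (-∫ u in a..s, lz u)
  have hμ : Continuous μ := continuous_exp_neg_integral hlz a
  have hφ' : Continuous (deriv φ) := hφ.continuous_deriv le_rfl
  have hlv' : Continuous (deriv lv) := hlv.continuous_deriv le_rfl
  have hfirst : ∫ s in a..b, μ s * (φ s * lx s + deriv φ s * lv s) = 0 :=
    integral_exp_neg_integral_mul_eq_zero hab hlz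
      ((hφ.continuous.mul hlx).add (hφ'.mul hlv.continuous)) hζ hζa hζb
  have hμlv : ∀ s ∈ uIcc a b, HasDerivAt (fun t => μ t * lv t)
      (μ s * (deriv lv s - lz s * lv s)) s := fun s _ =>
    ((hasDerivAt_exp_neg_integral hlz a s).mul
      ((hlv.differentiable one_ne_zero s).hasDerivAt)).congr_deriv (by ring)
  have hparts : ∫ s in a..b, μ s * lv s * deriv φ s
      = -∫ s in a..b, μ s * (deriv lv s - lz s * lv s) * φ s := by
    rw [integral_mul_deriv_eq_deriv_mul hμlv
      (fun s _ => (hφ.differentiable one_ne_zero s).hasDerivAt)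
      ((hμ.mul (hlv'.sub (hlz.mul hlv.continuous))).intervalIntegrable a b)
      (hφ'.intervalIntegrable a b), hφa, hφb]
    ring
  have hintegrable : ∀ f : ℝ → ℝ, Continuous f → IntervalIntegrable f volume a b :=
    fun f hf => hf.intervalIntegrable a b
  have hsplit : ∫ s in a..b, μ s * (φ s * lx s + deriv φ s * lv s)
      = (∫ s in a..b, μ s * φ s * lx s) + ∫ s in a..b, μ s * lv s * deriv φ s := by
    rw [← integral_add (hintegrable _ (by fun_prop)) (hintegrable _ (by fun_prop))]
    exact integral_congr fun s _ => by ring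
  have hresidual : ∫ s in a..b, φ s * (μ s * (deriv lv s - lx s - lz s * lv s))
      = (∫ s in a..b, μ s * (deriv lv s - lz s * lv s) * φ s)
        - ∫ s in a..b, μ s * φ s * lx s := by
    rw [← integral_sub (hintegrable _ (by fun_prop)) (hintegrable _ (by fun_prop))]
    exact integral_congr fun s _ => by ring
  linarith

theorem herglotz_equation_of_forall_variation {a b : ℝ} (hab : a < b) {lx lv lz : ℝ → ℝ}
    (hlx : Continuous lx) (hlv : ContDiff ℝ 1 lv) (hlz : Continuous lz)
    (hvar : ∀ φ : ℝ → ℝ, ContDiff ℝ ∞ φ → tsupport φ ⊆ Ioo a b → ∃ ζ : ℝ → ℝ,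
      (∀ s ∈ Icc a b, HasDerivAt ζ (φ s * lx s + deriv φ s * lv s + lz s * ζ s) s) ∧
        ζ a = 0 ∧ ζ b = 0) :
    ∀ t ∈ Icc a b, deriv lv t = lx t + lz t * lv t := by
  intro t ht
  have hweak : ∀ φ : ℝ → ℝ, ContDiff ℝ ∞ φ → tsupport φ ⊆ Ioo a b →
      ∫ s in a..b, φ s * (exp (-∫ u in a..s, lz u) * (deriv lv s - lx s - lz s * lv s)) = 0 := by
    intro φ hφ hsupp
    obtain ⟨ζ, hζ, hζa, hζb⟩ := hvar φ hφ hsupp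
    exact integral_mul_herglotz_residual_eq_zero hab.le (hφ.of_le (by norm_cast))
      (image_eq_zero_of_notMem_tsupport fun h => (hsupp h).1.false)
      (image_eq_zero_of_notMem_tsupport fun h => (hsupp h).2.false) hlx hlv hlz hζ hζa hζb
  have hresidual : exp (-∫ u in a..t, lz u) * (deriv lv t - lx t - lz t * lv t) = 0 :=
    eqOn_zero_of_forall_integral_mul_eq_zero hab
      ((continuous_exp_neg_integral hlz a).mul
        (((hlv.continuous_deriv le_rfl).sub hlx).sub (hlz.mul hlv.continuous))) hweak ht
  linarith [(mul_eq_zero.1 hresidual).resolve_left (exp_pos _).ne']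

def uncurry₄ {α β γ δ ε : Type*} (f : α → β → γ → δ → ε) : α × β × γ × δ → ε :=
  fun p => f p.1 p.2.1 p.2.2.1 p.2.2.2

theorem deriv_fourth_eq_fderiv_uncurry₄ {L : ℝ → E → E → ℝ → ℝ} {t : ℝ} {y v : E} {w : ℝ}
    (hL : DifferentiableAt ℝ (uncurry₄ L) (t, y, v, w)) :
    deriv (fun r => L t y v r) w = fderiv ℝ (uncurry₄ L) (t, y, v, w) (0, 0, 0, 1) := by
  have hc : HasDerivAt (fun r : ℝ => (t, y, v, r)) (0, 0, 0, 1) w :=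
    (hasDerivAt_const _ _).prodMk ((hasDerivAt_const _ _).prodMk
      ((hasDerivAt_const _ _).prodMk (hasDerivAt_id w)))
  exact (hL.hasFDerivAt.comp_hasDerivAt w hc).deriv

theorem contDiff_fderiv_apply_uncurry₄ {L : ℝ → E → E → ℝ → ℝ}
    (hL : ContDiff ℝ 2 (uncurry₄ L)) {x : ℝ → E} {z : ℝ → ℝ} (hx : ContDiff ℝ 2 x)
    (hz : ContDiff ℝ 1 z) (d : ℝ × E × E × ℝ) :
    ContDiff ℝ 1 (fun s => fderiv ℝ (uncurry₄ L) (s, x s, deriv x s, z s) d) :=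
  ((hL.fderiv_right le_rfl).clm_apply contDiff_const).comp
    (contDiff_id.prodMk ((hx.of_le one_le_two).prodMk (hx.deriv'.prodMk hz)))

section Coordinates

variable {ι : Type*} [Fintype ι] [DecidableEq ι] {L : ℝ → (ι → ℝ) → (ι → ℝ) → ℝ → ℝ}
  {t : ℝ} {y v : ι → ℝ} {w : ℝ}

theorem deriv_update_snd_eq_fderiv_uncurry₄ (hL : DifferentiableAt ℝ (uncurry₄ L) (t, y, v, w))
    (i : ι) :
    deriv (fun r => L t (Function.update y i r) v w) (y i)
      = fderiv ℝ (uncurry₄ L) (t, y, v, w) (0, Pi.single i 1, 0, 0) :=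
  (hL.hasFDerivAt.comp_hasDerivAt_of_eq (y i) ((hasDerivAt_const _ _).prodMk
    ((hasDerivAt_update y i (y i)).prodMk ((hasDerivAt_const _ _).prodMk
      (hasDerivAt_const _ _)))) (by simp)).deriv

theorem deriv_update_thd_eq_fderiv_uncurry₄ (hL : DifferentiableAt ℝ (uncurry₄ L) (t, y, v, w))
    (i : ι) :
    deriv (fun r => L t y (Function.update v i r) w) (v i)
      = fderiv ℝ (uncurry₄ L) (t, y, v, w) (0, 0, Pi.single i 1, 0) :=
  (hL.hasFDerivAt.comp_hasDerivAt_of_eq (v i) ((hasDerivAt_const _ _).prodMk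
    ((hasDerivAt_const _ _).prodMk ((hasDerivAt_update v i (v i)).prodMk
      (hasDerivAt_const _ _)))) (by simp)).deriv

end Coordinates

theorem hasDerivAt_deriv_comm {f : ℝ → ℝ → F}
    (hf : ContDiff ℝ 2 (fun p : ℝ × ℝ => f p.1 p.2)) (ε t : ℝ) :
    HasDerivAt (fun s => deriv (fun e => f e s) ε)
      (deriv (fun e => deriv (fun s => f e s) t) ε) t := by
  set G := fderiv ℝ (fun p : ℝ × ℝ => f p.1 p.2)
  have hfd : Differentiable ℝ (fun p : ℝ × ℝ => f p.1 p.2) := hf.differentiable two_ne_zero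
  have hGd : Differentiable ℝ G := (hf.fderiv_right le_rfl).differentiable one_ne_zero
  have hfst : ∀ e s, HasDerivAt (fun e => f e s) (G (e, s) (1, 0)) e := fun e s =>
    (hfd _).hasFDerivAt.comp_hasDerivAt e ((hasDerivAt_id e).prodMk (hasDerivAt_const e s))
  have hsnd : ∀ e s, HasDerivAt (fun s => f e s) (G (e, s) (0, 1)) s := fun e s =>
    (hfd _).hasFDerivAt.comp_hasDerivAt s ((hasDerivAt_const s e).prodMk (hasDerivAt_id s))
  have hG_snd : HasDerivAt (fun s => G (ε, s) (1, 0)) (fderiv ℝ G (ε, t) (0, 1) (1, 0)) t := by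
    simpa using ((hGd _).hasFDerivAt.comp_hasDerivAt t
      ((hasDerivAt_const t ε).prodMk (hasDerivAt_id t))).clm_apply (hasDerivAt_const t (1, 0))
  have hG_fst : HasDerivAt (fun e => G (e, t) (0, 1)) (fderiv ℝ G (ε, t) (1, 0) (0, 1)) ε := by
    simpa using ((hGd _).hasFDerivAt.comp_hasDerivAt ε
      ((hasDerivAt_id ε).prodMk (hasDerivAt_const ε t))).clm_apply (hasDerivAt_const ε (0, 1))
  rw [funext fun s => (hfst ε s).deriv, funext fun e => (hsnd e t).deriv, hG_fst.deriv,
    ← hf.contDiffAt.isSymmSndFDerivAt (by simp)]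
  exact hG_snd

theorem hasDerivAt_deriv_variation_s13 {L : ℝ → E → E → ℝ → ℝ}
    (hL : Differentiable ℝ (uncurry₄ L)) {x η : ℝ → E} {z : ℝ → ℝ} {Z : ℝ → ℝ → ℝ}
    (hZ : ContDiff ℝ 2 (fun p : ℝ × ℝ => Z p.1 p.2)) {t : ℝ} (hZ0 : Z 0 t = z t)
    (hZode : ∀ ε : ℝ, deriv (fun s => Z ε s) t
      = L t (x t + ε • η t) (deriv x t + ε • deriv η t) (Z ε t)) :
    HasDerivAt (fun s => deriv (fun ε => Z ε s) 0)
      (fderiv ℝ (uncurry₄ L) (t, x t, deriv x t, z t)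
        (0, η t, deriv η t, deriv (fun ε => Z ε t) 0)) t := by
  have hZε : HasDerivAt (fun ε => Z ε t) (deriv (fun ε => Z ε t) 0) 0 :=
    ((hZ.differentiable two_ne_zero).comp
      (differentiable_id.prodMk (differentiable_const t)) 0).hasDerivAt
  have hcurve : HasDerivAt (fun ε : ℝ => (t, x t + ε • η t, deriv x t + ε • deriv η t, Z ε t))
      (0, η t, deriv η t, deriv (fun ε => Z ε t) 0) 0 := by
    have hline : ∀ p q : E, HasDerivAt (fun ε : ℝ => p + ε • q) q 0 := fun p q => by
      simpa using ((hasDerivAt_id' (0 : ℝ)).smul_const q).const_add p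
    exact (hasDerivAt_const _ _).prodMk ((hline _ _).prodMk ((hline _ _).prodMk hZε))
  have hL' : HasDerivAt (fun ε => L t (x t + ε • η t) (deriv x t + ε • deriv η t) (Z ε t))
      (fderiv ℝ (uncurry₄ L) (t, x t, deriv x t, z t)
        (0, η t, deriv η t, deriv (fun ε => Z ε t) 0)) 0 :=
    (hL _).hasFDerivAt.comp_hasDerivAt_of_eq 0 hcurve (by simp [hZ0])
  have hcomm := hasDerivAt_deriv_comm hZ 0 t
  rwa [funext hZode, hL'.deriv] at hcomm

theorem hasDerivAt_deriv_variation_smul {L : ℝ → E → E → ℝ → ℝ}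
    (hL : Differentiable ℝ (uncurry₄ L)) {x : ℝ → E} {z φ : ℝ → ℝ} {e : E} {Z : ℝ → ℝ → ℝ}
    (hZ : ContDiff ℝ 2 (fun p : ℝ × ℝ => Z p.1 p.2)) {t : ℝ} (hφ : DifferentiableAt ℝ φ t)
    (hZ0 : Z 0 t = z t)
    (hZode : ∀ ε : ℝ, deriv (fun s => Z ε s) t
      = L t (x t + ε • φ t • e) (deriv x t + ε • deriv (fun s => φ s • e) t) (Z ε t)) :
    HasDerivAt (fun s => deriv (fun ε => Z ε s) 0)
      (φ t * fderiv ℝ (uncurry₄ L) (t, x t, deriv x t, z t) (0, e, 0, 0)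
        + deriv φ t * fderiv ℝ (uncurry₄ L) (t, x t, deriv x t, z t) (0, 0, e, 0)
        + fderiv ℝ (uncurry₄ L) (t, x t, deriv x t, z t) (0, 0, 0, 1)
          * deriv (fun ε => Z ε t) 0) t := by
  convert hasDerivAt_deriv_variation_s13 (η := fun s => φ s • e) hL hZ hZ0 hZode using 1
  rw [deriv_smul_const hφ, show ((0 : ℝ), φ t • e, deriv φ t • e, deriv (fun ε => Z ε t) 0)
      = φ t • ((0 : ℝ), e, (0 : E), (0 : ℝ)) + deriv φ t • ((0 : ℝ), (0 : E), e, (0 : ℝ))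
        + deriv (fun ε => Z ε t) 0 • ((0 : ℝ), (0 : E), (0 : E), (1 : ℝ)) by simp]
  simp only [map_add, map_smul, smul_eq_mul]
  ring

theorem stmt_13_general (n : ℕ) (a b z_a : ℝ) (hab : a < b)
    (L : ℝ → (Fin n → ℝ) → (Fin n → ℝ) → ℝ → ℝ)
    (hL : ContDiff ℝ 2
      (fun p : ℝ × (Fin n → ℝ) × (Fin n → ℝ) × ℝ => L p.1 p.2.1 p.2.2.1 p.2.2.2))
    (x : ℝ → Fin n → ℝ) (z : ℝ → ℝ) (hx : ContDiff ℝ 2 x) (hz : ContDiff ℝ 1 z)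
    (hvar : ∀ η : ℝ → Fin n → ℝ, ContDiff ℝ 2 η → η a = 0 → η b = 0 →
      ∃ Z : ℝ → ℝ → ℝ,
        ContDiff ℝ 2 (fun p : ℝ × ℝ => Z p.1 p.2) ∧
        (∀ t ∈ Set.Icc a b, Z 0 t = z t) ∧
        (∀ ε : ℝ, ∀ t ∈ Set.Icc a b,
          deriv (fun s => Z ε s) t
            = L t (x t + ε • η t) (deriv x t + ε • deriv η t) (Z ε t)) ∧
        (∀ ε : ℝ, Z ε a = z_a) ∧
        deriv (fun ε => Z ε b) 0 = 0) :
    ∀ i : Fin n, ∀ t ∈ Set.Icc a b,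
      deriv (fun s =>
          deriv (fun vi => L s (x s) (Function.update (deriv x s) i vi) (z s))
            (deriv x s i)) t
        = deriv (fun xi => L t (Function.update (x t) i xi) (deriv x t) (z t)) (x t i)
          + deriv (fun w => L t (x t) (deriv x t) w) (z t)
            * deriv (fun vi => L t (x t) (Function.update (deriv x t) i vi) (z t))
              (deriv x t i) := by
  intro i t ht
  have hL₄ : ContDiff ℝ 2 (uncurry₄ L) := hL
  have hLd : Differentiable ℝ (uncurry₄ L) := hL₄.differentiable two_ne_zero
  have hD := contDiff_fderiv_apply_uncurry₄ hL₄ hx hz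
  rw [funext fun s => deriv_update_thd_eq_fderiv_uncurry₄ (hLd _) i,
    deriv_update_snd_eq_fderiv_uncurry₄ (hLd _) i, deriv_fourth_eq_fderiv_uncurry₄ (hLd _),
    deriv_update_thd_eq_fderiv_uncurry₄ (hLd _) i]
  refine herglotz_equation_of_forall_variation hab (hD _).continuous (hD _) (hD _).continuous
    (fun φ hφ hsupp => ?_) t ht
  have hφ₂ : ContDiff ℝ 2 φ := hφ.of_le (by norm_cast)
  obtain ⟨Z, hZ, hZ0, hZode, hZa, hZb⟩ := hvar (fun s => φ s • Pi.single i 1)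
    (hφ₂.smul contDiff_const)
    (by simp [image_eq_zero_of_notMem_tsupport fun h => (hsupp h).1.false])
    (by simp [image_eq_zero_of_notMem_tsupport fun h => (hsupp h).2.false])
  refine ⟨fun s => deriv (fun ε => Z ε s) 0, fun s hs => ?_, by simp [hZa], hZb⟩
  exact hasDerivAt_deriv_variation_smul hLd hZ (hφ₂.differentiable two_ne_zero s) (hZ0 s hs)
    (fun ε => hZode ε s hs)

/-- Multi-dimensional Herglotz principle (differentiable case): if `(x,z)` with
`x : ℝ → ℝⁿ` solves `z' = L(t,x,x',z)`, `z(a) = z_a`, and for every admissible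
variation `η : ℝ → ℝⁿ` (vanishing at `a` and `b`) there is a `C²` family `Z(ε,t)` of
solutions with `Z(0,·) = z`, `Z(ε,a) = z_a` and `∂Z/∂ε(0,b) = 0`, then for every
coordinate `i` the Herglotz–Euler–Lagrange equation
`d/dt ∂L/∂vᵢ = ∂L/∂xᵢ + ∂L/∂z·∂L/∂vᵢ` holds on `[a,b]`. -/
theorem stmt_13 (n : ℕ) (hn : 1 ≤ n) (a b z_a : ℝ) (hab : a < b)
    (L : ℝ → (Fin n → ℝ) → (Fin n → ℝ) → ℝ → ℝ)
    (hL : ContDiff ℝ 2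
      (fun p : ℝ × (Fin n → ℝ) × (Fin n → ℝ) × ℝ => L p.1 p.2.1 p.2.2.1 p.2.2.2))
    (x : ℝ → Fin n → ℝ) (z : ℝ → ℝ) (hx : ContDiff ℝ 2 x) (hz : ContDiff ℝ 1 z)
    (hzeq : ∀ t ∈ Set.Icc a b, deriv z t = L t (x t) (deriv x t) (z t))
    (hza : z a = z_a)
    (hvar : ∀ η : ℝ → Fin n → ℝ, ContDiff ℝ 2 η → η a = 0 → η b = 0 →
      ∃ Z : ℝ → ℝ → ℝ,
        ContDiff ℝ 2 (fun p : ℝ × ℝ => Z p.1 p.2) ∧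
        (∀ t ∈ Set.Icc a b, Z 0 t = z t) ∧
        (∀ ε : ℝ, ∀ t ∈ Set.Icc a b,
          deriv (fun s => Z ε s) t
            = L t (x t + ε • η t) (deriv x t + ε • deriv η t) (Z ε t)) ∧
        (∀ ε : ℝ, Z ε a = z_a) ∧
        deriv (fun ε => Z ε b) 0 = 0) :
    ∀ i : Fin n, ∀ t ∈ Set.Icc a b,
      deriv (fun s =>
          deriv (fun vi => L s (x s) (Function.update (deriv x s) i vi) (z s))
            (deriv x s i)) t
        = deriv (fun xi => L t (Function.update (x t) i xi) (deriv x t) (z t)) (x t i)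
          + deriv (fun w => L t (x t) (deriv x t) w) (z t)
            * deriv (fun vi => L t (x t) (Function.update (deriv x t) i vi) (z t))
              (deriv x t i) :=
  stmt_13_general n a b z_a hab L hL x z hx hz hvar
end
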